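/- Let P be a ground normal logic program whose dependence graph has no positive cycle. Then P has at most one stable model. -/

import Mathlib

/-- A rule of a ground normal logic program. -/
structure Rule (V : Type*) where
  head : V
  pbody : Finset V
  nbody : Finset V
deriving DecidableEq

variable {V : Type*} [DecidableEq V] [Fintype V]

/-- The body formula of a rule holds in state `x`. -/
def bodySat (r : Rule V) (x : V → Bool) : Prop :=
  (∀ p ∈ r.pbody, x p = true) ∧ (∀ p ∈ r.nbody, x p = false)

instance (r : Rule V) (x : V → Bool) : Decidable (bodySat r x) := by
  unfold bodySat; infer_instance

/-- The Boolean network encoding of a logic program. -/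
def enc (P : Finset (Rule V)) (v : V) (x : V → Bool) : Bool :=
  decide (∃ r ∈ P, r.head = v ∧ bodySat r x)

/-- Positive arc of the dependence graph. -/
def posDG (P : Finset (Rule V)) (u v : V) : Prop :=
  ∃ r ∈ P, r.head = v ∧ u ∈ r.pbody

/-- Negative arc of the dependence graph. -/
def negDG (P : Finset (Rule V)) (u v : V) : Prop :=
  ∃ r ∈ P, r.head = v ∧ u ∈ r.nbody

/-- Positive arc of the influence graph of a Boolean network. -/
def posIG (f : V → (V → Bool) → Bool) (u v : V) : Prop :=
  ∃ x : V → Bool, f v (Function.update x u false) = false ∧ f v (Function.update x u true) = true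

/-- Negative arc of the influence graph of a Boolean network. -/
def negIG (f : V → (V → Bool) → Bool) (u v : V) : Prop :=
  ∃ x : V → Bool, f v (Function.update x u false) = true ∧ f v (Function.update x u true) = false

/-- `y` is a Herbrand model of the reduct of `P` with respect to `x`. -/
def modelsReduct (P : Finset (Rule V)) (x y : V → Bool) : Prop :=
  ∀ r ∈ P, (∀ p ∈ r.nbody, x p = false) → (∀ p ∈ r.pbody, y p = true) → y r.head = true

/-- `x` is a stable model of `P`: it is the least Herbrand model of the reduct `P^x`. -/
def isStable (P : Finset (Rule V)) (x : V → Bool) : Prop :=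
  modelsReduct P x x ∧ ∀ y : V → Bool, modelsReduct P x y → ∀ v, x v = true → y v = true

/-- Signed directed walks: `SWalk pos neg u v s n` means there is a directed walk of
length `n` from `u` to `v` whose parity of negative arcs is `s` (`true` = odd). -/
inductive SWalk {V : Type*} (pos neg : V → V → Prop) : V → V → Bool → ℕ → Prop where
  | nil (u : V) : SWalk pos neg u u false 0
  | consPos {u v w : V} {s : Bool} {n : ℕ} :
      pos u v → SWalk pos neg v w s n → SWalk pos neg u w s (n + 1)
  | consNeg {u v w : V} {s : Bool} {n : ℕ} :
      neg u v → SWalk pos neg v w s n → SWalk pos neg u w (!s) (n + 1)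

/-!
If `A ≠ B` are stable models, every atom `v` on which they disagree is the head of a rule
supporting it in one model but not in the other, and some body atom `u` of that rule is again a
disagreement atom, chosen so that the arc `u → v` of the dependence graph is positive exactly
when `A u = A v`. Along a walk of such arcs the parity of negative arcs is therefore `A u xor A v`.
Following such predecessors inside the finite set of disagreement atoms eventually closes a cycle,
and its parity is `A u xor A u = false`: a positive cycle.
-/

theorem Function.exists_iterate_eq_self {α : Type*} [Finite α] [Nonempty α] (f : α → α) :
    ∃ x n, n ≠ 0 ∧ f^[n] x = x := by
  obtain ⟨i, j, hij, heq⟩ :=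
    Finite.exists_ne_map_eq_of_infinite fun n : ℕ ↦ f^[n] (Classical.arbitrary α)
  wlog hlt : i < j generalizing i j
  · exact this j i hij.symm heq.symm (by omega)
  refine ⟨f^[i] (Classical.arbitrary α), j - i, by omega, ?_⟩
  rw [← Function.iterate_add_apply, Nat.sub_add_cancel hlt.le, heq]

namespace SWalk

variable {α : Type*} {pos neg : α → α → Prop}

theorem of_iterate {β : Type*} (f : β → β) (g : β → α) (c : α → Bool)
    (hf : ∀ a, pos (g (f a)) (g a) ∧ c (g (f a)) = c (g a) ∨
      neg (g (f a)) (g a) ∧ c (g (f a)) ≠ c (g a))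
    (k : ℕ) (a : β) : SWalk pos neg (g (f^[k] a)) (g a) (c (g (f^[k] a)) ^^ c (g a)) k := by
  induction k with
  | zero => simpa using SWalk.nil (g a)
  | succ k ih =>
    rw [Function.iterate_succ_apply']
    rcases hf (f^[k] a) with ⟨harc, hsame⟩ | ⟨harc, hdiff⟩
    · rw [hsame]
      exact .consPos harc ih
    · have hflip : (c (g (f (f^[k] a))) ^^ c (g a)) = !(c (g (f^[k] a)) ^^ c (g a)) := by
        rw [Bool.eq_not_of_ne hdiff, Bool.not_xor]
      rw [hflip]
      exact .consNeg harc ih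

theorem exists_positive_cycle_of_forall_exists_pred [Finite α] (c : α → Bool) {S : Set α} (hS : S.Nonempty)
    (hpred : ∀ v ∈ S, ∃ u ∈ S, pos u v ∧ c u = c v ∨ neg u v ∧ c u ≠ c v) :
    ∃ u n, n ≠ 0 ∧ SWalk pos neg u u false n := by
  choose f hfS hf using hpred
  let next : S → S := fun v ↦ ⟨f v v.2, hfS v v.2⟩
  have : Nonempty S := hS.to_subtype
  obtain ⟨a, n, hn, hcycle⟩ := Function.exists_iterate_eq_self next
  have hwalk := of_iterate next Subtype.val c (fun v ↦ hf v v.2) n a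
  rw [hcycle, Bool.xor_self] at hwalk
  exact ⟨a, n, hn, hwalk⟩

end SWalk

section StableModel

variable {P : Finset (Rule V)} {A B : V → Bool}

/-- Removing an unsupported atom from a stable model would give a smaller model of the reduct. -/
theorem isStable.exists_rule_bodySat (hA : isStable P A) {v : V} (hv : A v = true) :
    ∃ r ∈ P, r.head = v ∧ bodySat r A := by
  by_contra! hunsupp
  suffices hmodel : modelsReduct P A (Function.update A v false) by
    simpa using hA.2 _ hmodel v hv
  intro r hr hneg hpos
  have hposA : ∀ p ∈ r.pbody, A p = true := fun p hp ↦ by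
    have := hpos p hp
    rcases eq_or_ne p v with rfl | hpv
    · exact hv
    · simpa [hpv] using this
  by_cases hhead : r.head = v
  · exact absurd ⟨hposA, hneg⟩ (hunsupp r hr hhead)
  · simpa [hhead] using hA.1 r hr hneg hposA

theorem isStable.exists_disagreeing_pred_of_true (hA : isStable P A) (hB : modelsReduct P B B)
    {v : V} (hAv : A v = true) (hBv : B v = false) :
    ∃ u, A u ≠ B u ∧ (posDG P u v ∧ A u = A v ∨ negDG P u v ∧ A u ≠ A v) := by
  obtain ⟨r, hr, rfl, hposA, hnegA⟩ := hA.exists_rule_bodySat hAv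
  have hnotB : ¬ ((∀ p ∈ r.nbody, B p = false) ∧ ∀ p ∈ r.pbody, B p = true) :=
    fun ⟨hneg, hpos⟩ ↦ by simp [hB r hr hneg hpos] at hBv
  simp only [not_and_or, not_forall, Bool.not_eq_false, Bool.not_eq_true] at hnotB
  rcases hnotB with ⟨p, hp, hBp⟩ | ⟨p, hp, hBp⟩
  · exact ⟨p, by simp [hnegA p hp, hBp], .inr ⟨⟨r, hr, rfl, hp⟩, by simp [hnegA p hp, hAv]⟩⟩
  · exact ⟨p, by simp [hposA p hp, hBp], .inl ⟨⟨r, hr, rfl, hp⟩, by simp [hposA p hp, hAv]⟩⟩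

theorem isStable.exists_disagreeing_pred (hA : isStable P A) (hB : isStable P B) {v : V}
    (hv : A v ≠ B v) :
    ∃ u, A u ≠ B u ∧ (posDG P u v ∧ A u = A v ∨ negDG P u v ∧ A u ≠ A v) := by
  rcases Bool.eq_false_or_eq_true (A v) with hAv | hAv
  · exact hA.exists_disagreeing_pred_of_true hB.1 hAv (by simpa [hAv] using hv.symm)
  · obtain ⟨u, hu, harc⟩ :=
      hB.exists_disagreeing_pred_of_true hA.1 (by simpa [hAv] using hv.symm) hAv
    have hsame : B u = B v ↔ A u = A v := by
      rw [Bool.eq_not_of_ne hu, Bool.eq_not_of_ne hv.symm, Bool.not_inj_iff]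
    exact ⟨u, Ne.symm hu, by simpa only [hsame, ne_eq] using harc⟩

end StableModel

/-- if the dependence graph of `P` has no positive cycle, then `P` has at
most one stable model. -/
theorem stmt7 {V : Type*} [DecidableEq V] [Fintype V] (P : Finset (Rule V))
    (hnopos : ∀ (u : V) (n : ℕ), n ≠ 0 → ¬ SWalk (posDG P) (negDG P) u u false n) :
    ∀ A B : V → Bool, isStable P A → isStable P B → A = B := by
  intro A B hA hB
  by_contra hAB
  obtain ⟨v, hv⟩ := Function.ne_iff.mp hAB
  obtain ⟨u, n, hn, hcycle⟩ := SWalk.exists_positive_cycle_of_forall_exists_pred A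
    (S := {v | A v ≠ B v}) ⟨v, hv⟩ fun _ hw ↦ hA.exists_disagreeing_pred hB hw
  exact hnopos u n hn hcycle
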